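/- arXiv:1512.05515 — 3 statements merged into one kernel-verified Lean document; each statement's English description precedes it below -/
import Mathlib

section
/- Let ∇ be a Type A connection on ℝ² with Γ₁₁² = 0, Γ₁₂² = 0 and ρ₂₂ := Γ₁₂¹(Γ₂₂² − Γ₁₂¹) + Γ₁₁¹Γ₂₂¹ ≠ 0, so that its Ricci tensor is ρ = ρ₂₂ dx²⊗dx² ≠ 0. Then a smooth function f on ℝ² is an affine gradient Ricci soliton for ∇ if and only if f(x¹,x²) = ξ(x²) for a smooth function ξ of one variable satisfying ξ'' − Γ₂₂² ξ' + ρ₂₂ = 0. -/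
noncomputable section

/-- The coordinate directions of ℝ². -/
def ee : Fin 2 → ℝ × ℝ := ![(1, 0), (0, 1)]

/-- Partial derivative `∂_i f`. -/
def pd (i : Fin 2) (f : ℝ × ℝ → ℝ) : ℝ × ℝ → ℝ :=
  fun p => fderiv ℝ f p (ee i)

/-- Ricci tensor of the Type A connection with constant Christoffel symbols. -/
def ricciA (Γ : Fin 2 → Fin 2 → Fin 2 → ℝ) (j k : Fin 2) : ℝ :=
  ∑ i, ∑ q, (Γ i q i * Γ j k q - Γ j q i * Γ i k q)

/-- Hessian `H(f)_{ij} = ∂_i∂_j f − Σ_k Γ_{ij}^k ∂_k f` for constant Christoffel symbols. -/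
def hessA (Γ : Fin 2 → Fin 2 → Fin 2 → ℝ) (f : ℝ × ℝ → ℝ) (i j : Fin 2) : ℝ × ℝ → ℝ :=
  fun p => pd i (pd j f) p - ∑ k, Γ i j k * pd k f p


lemma contDiff_pd {f : ℝ × ℝ → ℝ} (hf : ContDiff ℝ (⊤ : ℕ∞) f) (i : Fin 2) :
    ContDiff ℝ (⊤ : ℕ∞) (pd i f) :=
  (hf.fderiv_right (by simp)).clm_apply contDiff_const

lemma pd_comm {f : ℝ × ℝ → ℝ} (hf : ContDiff ℝ (⊤ : ℕ∞) f) (i j : Fin 2) (p : ℝ × ℝ) :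
    pd i (pd j f) p = pd j (pd i f) p := by
  have hdf : ∀ q, HasFDerivAt f (fderiv ℝ f q) q := fun q =>
    (hf.differentiable (by simp) q).hasFDerivAt
  have hdf2 : HasFDerivAt (fderiv ℝ f) (fderiv ℝ (fderiv ℝ f) p) p :=
    ((hf.fderiv_right (m := (⊤ : ℕ∞)) (by simp)).differentiable (by simp) p).hasFDerivAt
  have key := second_derivative_symmetric hdf hdf2 (ee i) (ee j)
  have hpd : ∀ (k l : Fin 2), pd k (pd l f) p = fderiv ℝ (fderiv ℝ f) p (ee k) (ee l) := by
    intro k l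
    have h : HasFDerivAt (pd l f)
        ((ContinuousLinearMap.apply ℝ ℝ (ee l)).comp (fderiv ℝ (fderiv ℝ f) p)) p :=
      (ContinuousLinearMap.apply ℝ ℝ (ee l)).hasFDerivAt.comp p hdf2
    simp [pd, h.fderiv]
  rw [hpd, hpd, key]

lemma pd_combo {g h : ℝ × ℝ → ℝ} (hg : Differentiable ℝ g) (hh : Differentiable ℝ h)
    (c d e : ℝ) (i : Fin 2) (p : ℝ × ℝ) :
    pd i (fun q => c * g q + d * h q + e) p = c * pd i g p + d * pd i h p := by
  have h' : HasFDerivAt (fun q => c * g q + d * h q + e)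
      (c • fderiv ℝ g p + d • fderiv ℝ h p) p := by
    simpa using (((hg p).hasFDerivAt.const_mul c).add ((hh p).hasFDerivAt.const_mul d)).add_const e
  simp [pd, h'.fderiv]

lemma pd_snd {g : ℝ → ℝ} (hg : Differentiable ℝ g) (i : Fin 2) (p : ℝ × ℝ) :
    pd i (fun q : ℝ × ℝ => g q.2) p = deriv g p.2 * (ee i).2 := by
  have h : HasFDerivAt (fun q : ℝ × ℝ => g q.2)
      ((deriv g p.2) • (ContinuousLinearMap.snd ℝ ℝ ℝ)) p :=
    (hg p.2).hasDerivAt.comp_hasFDerivAt p hasFDerivAt_snd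
  simp [pd, h.fderiv]

lemma hasDerivAt_slice_x {g : ℝ × ℝ → ℝ} (hg : Differentiable ℝ g) (y t : ℝ) :
    HasDerivAt (fun s => g (s, y)) (pd 0 g (t, y)) t := by
  have := (hg (t, y)).hasFDerivAt.comp_hasDerivAt t ((hasDerivAt_id t).prodMk (hasDerivAt_const t y))
  simpa [pd, ee, Function.comp_def] using this

lemma hasDerivAt_slice_y {g : ℝ × ℝ → ℝ} (hg : Differentiable ℝ g) (x t : ℝ) :
    HasDerivAt (fun s => g (x, s)) (pd 1 g (x, t)) t := by
  have := (hg (x, t)).hasFDerivAt.comp_hasDerivAt t ((hasDerivAt_const t x).prodMk (hasDerivAt_id t))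
  simpa [pd, ee, Function.comp_def] using this

/-- for a Type A connection normalized so that `Γ₁₁² = Γ₁₂² = 0` and
`ρ = ρ₂₂ dx²⊗dx² ≠ 0`, a smooth function `f` is an affine gradient Ricci soliton iff
`f(x¹,x²) = ξ(x²)` where `ξ'' − Γ₂₂² ξ' + ρ₂₂ = 0`. -/
theorem stmt13 (Γ : Fin 2 → Fin 2 → Fin 2 → ℝ)
    (hΓ : ∀ i j k, Γ i j k = Γ j i k)
    (h1 : Γ 0 0 1 = 0) (h2 : Γ 0 1 1 = 0)
    (hρ : Γ 0 1 0 * (Γ 1 1 1 - Γ 0 1 0) + Γ 0 0 0 * Γ 1 1 0 ≠ 0)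
    (f : ℝ × ℝ → ℝ) (hf : ContDiff ℝ (⊤ : ℕ∞) f) :
    (∀ i j : Fin 2, ∀ p : ℝ × ℝ, hessA Γ f i j p + ricciA Γ i j = 0) ↔
      ∃ ξ : ℝ → ℝ, ContDiff ℝ (⊤ : ℕ∞) ξ ∧
        (∀ t : ℝ, deriv (deriv ξ) t - Γ 1 1 1 * deriv ξ t
          + (Γ 0 1 0 * (Γ 1 1 1 - Γ 0 1 0) + Γ 0 0 0 * Γ 1 1 0) = 0) ∧
        (∀ p : ℝ × ℝ, f p = ξ p.2) := by
  have g0 : Γ 1 0 0 = Γ 0 1 0 := hΓ 1 0 0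
  have g1 : Γ 1 0 1 = 0 := (hΓ 1 0 1).trans h2
  set ρ : ℝ := Γ 0 1 0 * (Γ 1 1 1 - Γ 0 1 0) + Γ 0 0 0 * Γ 1 1 0 with hρdef
  have r00 : ricciA Γ 0 0 = 0 := by
    simp only [ricciA, Fin.sum_univ_two, g0, g1, h1, h2]; ring
  have r01 : ricciA Γ 0 1 = 0 := by
    simp only [ricciA, Fin.sum_univ_two, g0, g1, h1, h2]; ring
  have r10 : ricciA Γ 1 0 = 0 := by
    simp only [ricciA, Fin.sum_univ_two, g0, g1, h1, h2]; ring
  have r11 : ricciA Γ 1 1 = ρ := by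
    simp only [ricciA, Fin.sum_univ_two, g0, g1, h1, h2, hρdef]; ring
  have hfd : Differentiable ℝ f := hf.differentiable (by simp)
  have hu : ContDiff ℝ (⊤ : ℕ∞) (pd 0 f) := contDiff_pd hf 0
  have hv : ContDiff ℝ (⊤ : ℕ∞) (pd 1 f) := contDiff_pd hf 1
  have hud : Differentiable ℝ (pd 0 f) := hu.differentiable (by simp)
  have hvd : Differentiable ℝ (pd 1 f) := hv.differentiable (by simp)
  constructor
  · intro H
    have E00 : ∀ p, pd 0 (pd 0 f) p = Γ 0 0 0 * pd 0 f p := by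
      intro p; have := H 0 0 p
      simp only [hessA, Fin.sum_univ_two, r00, h1] at this; linarith
    have E01 : ∀ p, pd 0 (pd 1 f) p = Γ 0 1 0 * pd 0 f p := by
      intro p; have := H 0 1 p
      simp only [hessA, Fin.sum_univ_two, r01, h2] at this; linarith
    have E11 : ∀ p, pd 1 (pd 1 f) p
        = Γ 1 1 0 * pd 0 f p + Γ 1 1 1 * pd 1 f p + (-ρ) := by
      intro p; have := H 1 1 p
      simp only [hessA, Fin.sum_univ_two, r11] at this; linarith
    have hu1 : ∀ p, pd 1 (pd 0 f) p = Γ 0 1 0 * pd 0 f p := fun p =>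
      (pd_comm hf 1 0 p).trans (E01 p)
    -- show pd 0 f = 0
    have hu0 : ∀ p, pd 0 f p = 0 := by
      intro p
      have hE11 : pd 1 (pd 1 f)
          = fun q => Γ 1 1 0 * pd 0 f q + Γ 1 1 1 * pd 1 f q + (-ρ) := funext E11
      have lhs1 : pd 0 (pd 1 (pd 1 f)) p
          = Γ 1 1 0 * (Γ 0 0 0 * pd 0 f p) + Γ 1 1 1 * (Γ 0 1 0 * pd 0 f p) := by
        rw [hE11, pd_combo hud hvd, E00 p, E01 p]
      have hE01 : pd 0 (pd 1 f)
          = fun q => Γ 0 1 0 * pd 0 f q + 0 * pd 0 f q + 0 := by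
        funext q; rw [E01 q]; ring
      have lhs2 : pd 0 (pd 1 (pd 1 f)) p = Γ 0 1 0 * (Γ 0 1 0 * pd 0 f p) := by
        rw [pd_comm hv 0 1 p, hE01, pd_combo hud hud, hu1 p]; ring
      have key : ρ * pd 0 f p = 0 := by
        have := lhs1.symm.trans lhs2
        rw [hρdef]; linear_combination this
      exact (mul_eq_zero.mp key).resolve_left hρ
    -- f is constant in the first variable
    have hconst : ∀ x y : ℝ, f (x, y) = f (0, y) := by
      intro x y
      have hdiff : Differentiable ℝ (fun s => f (s, y)) := fun s =>
        (hasDerivAt_slice_x hfd y s).differentiableAt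
      have hder : ∀ s, deriv (fun s => f (s, y)) s = 0 := fun s => by
        rw [(hasDerivAt_slice_x hfd y s).deriv, hu0]
      exact is_const_of_deriv_eq_zero hdiff hder x 0
    refine ⟨fun t => f (0, t), hf.comp (contDiff_const.prodMk contDiff_id), ?_, ?_⟩
    · intro t
      have hd1 : deriv (fun t => f (0, t)) = fun t => pd 1 f (0, t) :=
        funext fun s => (hasDerivAt_slice_y hfd 0 s).deriv
      have hd2 : deriv (deriv (fun t => f (0, t))) t = pd 1 (pd 1 f) (0, t) := by
        rw [hd1]; exact (hasDerivAt_slice_y hvd 0 t).deriv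
      rw [hd2, hd1, E11 (0, t), hu0 (0, t)]; ring
    · intro p
      have := hconst p.1 p.2
      simpa using this
  · rintro ⟨ξ, hξ, hODE, hfe⟩
    have hfe' : f = fun q : ℝ × ℝ => ξ q.2 := funext hfe
    have hξd : Differentiable ℝ ξ := hξ.differentiable (by simp)
    have hξ' : ContDiff ℝ (⊤ : ℕ∞) (deriv ξ) := by
      have h := (hξ.fderiv_right (m := (⊤ : ℕ∞)) (by simp)).clm_apply (contDiff_const (c := (1 : ℝ)))
      exact h
    have hξ'd : Differentiable ℝ (deriv ξ) := hξ'.differentiable (by simp)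
    have p0 : pd 0 f = fun _ => (0 : ℝ) := by
      funext p; rw [hfe', pd_snd hξd]; simp [ee]
    have p1 : pd 1 f = fun q : ℝ × ℝ => deriv ξ q.2 := by
      funext p; rw [hfe', pd_snd hξd]; simp [ee]
    have q00 : ∀ p, pd 0 (pd 0 f) p = 0 := by
      intro p; rw [p0]; simp [pd]
    have q10 : ∀ p, pd 1 (pd 0 f) p = 0 := by
      intro p; rw [p0]; simp [pd]
    have q01 : ∀ p, pd 0 (pd 1 f) p = 0 := by
      intro p; rw [p1, pd_snd hξ'd]; simp [ee]
    have q11 : ∀ p : ℝ × ℝ, pd 1 (pd 1 f) p = deriv (deriv ξ) p.2 := by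
      intro p; rw [p1, pd_snd hξ'd]; simp [ee]
    have hp0 : ∀ p : ℝ × ℝ, pd 0 f p = 0 := fun p => by rw [p0]
    have hp1 : ∀ p : ℝ × ℝ, pd 1 f p = deriv ξ p.2 := fun p => by rw [p1]
    have c00 : ∀ p : ℝ × ℝ, hessA Γ f 0 0 p + ricciA Γ 0 0 = 0 := by
      intro p
      simp only [hessA, Fin.sum_univ_two, q00, hp0, hp1, h1, r00]
      ring
    have c01 : ∀ p : ℝ × ℝ, hessA Γ f 0 1 p + ricciA Γ 0 1 = 0 := by
      intro p
      simp only [hessA, Fin.sum_univ_two, q01, hp0, hp1, h2, r01]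
      ring
    have c10 : ∀ p : ℝ × ℝ, hessA Γ f 1 0 p + ricciA Γ 1 0 = 0 := by
      intro p
      simp only [hessA, Fin.sum_univ_two, q10, hp0, hp1, g1, r10]
      ring
    have c11 : ∀ p : ℝ × ℝ, hessA Γ f 1 1 p + ricciA Γ 1 1 = 0 := by
      intro p
      have := hODE p.2
      simp only [hessA, Fin.sum_univ_two, q11, hp0, hp1, r11]
      linarith
    intro i j p
    fin_cases i <;> fin_cases j
    · exact c00 p
    · exact c01 p
    · exact c10 p
    · exact c11 p
end
end

section
/- For c > 0 and a fixed sign ε = ±1, let ∇ be the Type B connection 𝒫₀,c^ε on M = (0,∞)×ℝ with constants C₁₁¹ = 1 − εc², C₁₁² = c, C₁₂¹ = 0, C₁₂² = −εc², C₂₂¹ = ε, C₂₂² = 2εc. Then the Ricci tensor of ∇ is skew-symmetric (indeed ρ = εc(x¹)⁻²(dx¹⊗dx² − dx²⊗dx¹), so ρ^s = 0), and a smooth function f on M is an affine gradient Ricci soliton for ∇ (equivalently, H(f) = 0) if and only if f is constant. -/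
noncomputable section

/-- The underlying manifold `M = (0,∞) × ℝ` of a Type B geometry. -/
def MB : Set (ℝ × ℝ) := {p | 0 < p.1}

/-- Christoffel symbols `Γ_{ij}^k = C_{ij}^k / x¹` of a Type B connection on `(0,∞)×ℝ`. -/
def GammaB (C : Fin 2 → Fin 2 → Fin 2 → ℝ) (i j k : Fin 2) : ℝ × ℝ → ℝ :=
  fun p => C i j k / p.1

/-- Ricci tensor of a Type B connection. -/
def ricciB (C : Fin 2 → Fin 2 → Fin 2 → ℝ) (j k : Fin 2) : ℝ × ℝ → ℝ :=
  fun p => (∑ i, (pd i (GammaB C j k i) p - pd j (GammaB C i k i) p))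
    + ∑ i, ∑ q, (GammaB C i q i p * GammaB C j k q p - GammaB C j q i p * GammaB C i k q p)

/-- Symmetrized Ricci tensor of a Type B connection. -/
def ricciSymB (C : Fin 2 → Fin 2 → Fin 2 → ℝ) (i j : Fin 2) : ℝ × ℝ → ℝ :=
  fun p => (ricciB C i j p + ricciB C j i p) / 2

/-- Hessian `H(f)_{ij} = ∂_i∂_j f − Σ_k Γ_{ij}^k ∂_k f` of a Type B connection. -/
def hessB (C : Fin 2 → Fin 2 → Fin 2 → ℝ) (f : ℝ × ℝ → ℝ) (i j : Fin 2) : ℝ × ℝ → ℝ :=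
  fun p => pd i (pd j f) p - ∑ k, GammaB C i j k p * pd k f p

/-- `f` is an affine gradient Ricci soliton for the Type B connection determined by `C`:
`H(f)_{ij} + ρ^s_{ij} = 0` on `M`. -/
def IsSolitonB (C : Fin 2 → Fin 2 → Fin 2 → ℝ) (f : ℝ × ℝ → ℝ) : Prop :=
  ∀ i j : Fin 2, ∀ p : ℝ × ℝ, 0 < p.1 → hessB C f i j p + ricciSymB C i j p = 0

lemma ee0 : ee 0 = (1,0) := rfl
lemma ee1 : ee 1 = (0,1) := rfl

lemma isOpen_MB : IsOpen MB := isOpen_lt continuous_const continuous_fst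

lemma convex_MB : Convex ℝ MB := by
  intro x hx y hy a b ha hb hab
  simp only [MB, Set.mem_setOf_eq] at *
  have h1 : (a • x + b • y).1 = a * x.1 + b * y.1 := rfl
  rw [h1]
  rcases eq_or_lt_of_le ha with h | h
  · have hb1 : b = 1 := by linarith
    simp [← h, hb1, hy]
  · nlinarith

lemma pd_congr {u v : ℝ × ℝ → ℝ} {p : ℝ × ℝ} (h : u =ᶠ[nhds p] v) (i : Fin 2) :
    pd i u p = pd i v p := by
  unfold pd; rw [h.fderiv_eq]

lemma pd_const (a : ℝ) (p : ℝ × ℝ) (i : Fin 2) : pd i (fun _ => a) p = 0 := by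
  simp [pd]

lemma hasFDerivAt_inv1 {p : ℝ × ℝ} (hp : p.1 ≠ 0) :
    HasFDerivAt (fun q : ℝ × ℝ => (q.1)⁻¹)
      ((-(p.1 ^ 2)⁻¹) • ContinuousLinearMap.fst ℝ ℝ ℝ) p := by
  have h1 : HasDerivAt (fun x : ℝ => x⁻¹) (-(p.1 ^ 2)⁻¹) p.1 := hasDerivAt_inv hp
  have h2 := h1.hasFDerivAt.comp p hasFDerivAt_fst
  refine HasFDerivAt.congr_fderiv h2 ?_
  ext v <;> simp [mul_comm]

lemma pd_const_div (a : ℝ) {p : ℝ × ℝ} (hp : p.1 ≠ 0) (i : Fin 2) :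
    pd i (fun q : ℝ × ℝ => a / q.1) p = -(a * (ee i).1) / p.1 ^ 2 := by
  have h := ((hasFDerivAt_inv1 hp).const_mul a).fderiv
  unfold pd
  simp only [div_eq_mul_inv]
  rw [h]
  simp
  ring

lemma pd_GammaB (C : Fin 2 → Fin 2 → Fin 2 → ℝ) {p : ℝ × ℝ} (hp : p.1 ≠ 0)
    (i j k l : Fin 2) :
    pd i (GammaB C j k l) p = -(C j k l * (ee i).1) / p.1 ^ 2 :=
  pd_const_div _ hp i

lemma pd_div_x {u : ℝ × ℝ → ℝ} {p : ℝ × ℝ} (hu : DifferentiableAt ℝ u p)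
    (hp : p.1 ≠ 0) (i : Fin 2) :
    pd i (fun q => u q / q.1) p = pd i u p / p.1 - u p * (ee i).1 / p.1 ^ 2 := by
  have h := (hu.hasFDerivAt.mul (hasFDerivAt_inv1 hp)).fderiv
  unfold pd
  simp only [div_eq_mul_inv]
  rw [show (fun q => u q * q.1⁻¹) = (u * fun q => q.1⁻¹) from rfl, h]
  simp only [ContinuousLinearMap.add_apply, ContinuousLinearMap.smul_apply,
    ContinuousLinearMap.coe_fst', smul_eq_mul]
  ring

lemma pd_const_mul {u : ℝ × ℝ → ℝ} {p : ℝ × ℝ} (hu : DifferentiableAt ℝ u p)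
    (a : ℝ) (i : Fin 2) :
    pd i (fun q => a * u q) p = a * pd i u p := by
  unfold pd
  rw [fderiv_const_mul hu]
  simp

lemma pd_comb {u v : ℝ × ℝ → ℝ} {p : ℝ × ℝ} (hu : DifferentiableAt ℝ u p)
    (hv : DifferentiableAt ℝ v p) (a b : ℝ) (i : Fin 2) :
    pd i (fun q => a * u q + b * v q) p = a * pd i u p + b * pd i v p := by
  have h := (((hu.hasFDerivAt.const_mul a)).add ((hv.hasFDerivAt.const_mul b))).fderiv
  unfold pd
  rw [show (fun q => a * u q + b * v q) = ((fun y => a * u y) + fun y => b * v y) from rfl, h]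
  simp

lemma contDiffAt_fderiv {u : ℝ × ℝ → ℝ} {p : ℝ × ℝ} (hu : ContDiffAt ℝ (⊤ : ℕ∞) u p) :
    ContDiffAt ℝ (⊤ : ℕ∞) (fderiv ℝ u) p :=
  hu.fderiv_right (by simp)

lemma contDiffAt_pd {u : ℝ × ℝ → ℝ} {p : ℝ × ℝ} (hu : ContDiffAt ℝ (⊤ : ℕ∞) u p) (j : Fin 2) :
    ContDiffAt ℝ (⊤ : ℕ∞) (pd j u) p :=
  (contDiffAt_fderiv hu).clm_apply contDiffAt_const

lemma pd_pd_eq {u : ℝ × ℝ → ℝ} {p : ℝ × ℝ} (hu : ContDiffAt ℝ (⊤ : ℕ∞) u p) (i j : Fin 2) :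
    pd i (pd j u) p = fderiv ℝ (fderiv ℝ u) p (ee i) (ee j) := by
  have hd : DifferentiableAt ℝ (fderiv ℝ u) p :=
    (contDiffAt_fderiv hu).differentiableAt (by simp)
  show fderiv ℝ (fun q => fderiv ℝ u q (ee j)) p (ee i) = _
  rw [fderiv_clm_apply hd (differentiableAt_const (ee j))]
  simp

lemma pd_swap {u : ℝ × ℝ → ℝ} {p : ℝ × ℝ} (hu : ContDiffAt ℝ (⊤ : ℕ∞) u p) (i j : Fin 2) :
    pd i (pd j u) p = pd j (pd i u) p := by
  rw [pd_pd_eq hu, pd_pd_eq hu]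
  exact hu.isSymmSndFDerivAt (by rw [minSmoothness_of_isRCLikeNormedField]; exact WithTop.coe_le_coe.mpr le_top) (ee i) (ee j)

/-- for the Type B connection `𝒫₀,c^ε` (c > 0, ε = ±1) the Ricci
tensor is skew-symmetric, given explicitly by `ρ = εc(x¹)⁻²(dx¹⊗dx² − dx²⊗dx¹)`, and a
smooth function on `M` is an affine gradient Ricci soliton iff it is constant. -/
theorem stmt15 (c ε : ℝ) (hc : 0 < c) (hε : ε = 1 ∨ ε = -1)
    (C : Fin 2 → Fin 2 → Fin 2 → ℝ)
    (hC : ∀ i j k, C i j k = C j i k)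
    (c1 : C 0 0 0 = 1 - ε * c ^ 2) (c2 : C 0 0 1 = c) (c3 : C 0 1 0 = 0)
    (c4 : C 0 1 1 = -ε * c ^ 2) (c5 : C 1 1 0 = ε) (c6 : C 1 1 1 = 2 * ε * c) :
    (∀ p : ℝ × ℝ, 0 < p.1 →
      ricciB C 0 0 p = 0 ∧
      ricciB C 0 1 p = ε * c * (p.1 ^ 2)⁻¹ ∧
      ricciB C 1 0 p = -(ε * c) * (p.1 ^ 2)⁻¹ ∧
      ricciB C 1 1 p = 0 ∧
      (∀ j k : Fin 2, ricciB C j k p = -ricciB C k j p)) ∧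
    (∀ f : ℝ × ℝ → ℝ, ContDiffOn ℝ (⊤ : ℕ∞) f MB →
      (IsSolitonB C f ↔ ∃ κ : ℝ, ∀ p : ℝ × ℝ, 0 < p.1 → f p = κ)) := by
  have c7 : C 1 0 0 = 0 := (hC 1 0 0).trans c3
  have c8 : C 1 0 1 = -ε * c ^ 2 := (hC 1 0 1).trans c4
  have hc0 : c ≠ 0 := hc.ne'
  have ric : ∀ p : ℝ × ℝ, 0 < p.1 →
      ricciB C 0 0 p = 0 ∧ ricciB C 0 1 p = ε * c * (p.1 ^ 2)⁻¹ ∧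
      ricciB C 1 0 p = -(ε * c) * (p.1 ^ 2)⁻¹ ∧ ricciB C 1 1 p = 0 := by
    intro p hp
    have hx := hp.ne'
    refine ⟨?_, ?_, ?_, ?_⟩ <;>
    · simp only [ricciB, GammaB, Fin.sum_univ_two, pd_GammaB _ hx, ee0, ee1,
        c1, c2, c3, c4, c5, c6, c7, c8]
      rcases hε with h | h <;> subst h <;> field_simp <;> ring
  have skew : ∀ p : ℝ × ℝ, 0 < p.1 → ∀ j k : Fin 2, ricciB C j k p = -ricciB C k j p := by
    intro p hp j k
    obtain ⟨h1, h2, h3, h4⟩ := ric p hp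
    fin_cases j <;> fin_cases k <;> simp [h1, h2, h3, h4] <;> ring
  have rsym : ∀ (i j : Fin 2) (p : ℝ × ℝ), 0 < p.1 → ricciSymB C i j p = 0 := by
    intro i j p hp
    simp only [ricciSymB]
    rw [skew p hp i j]
    ring
  refine ⟨fun p hp => ⟨(ric p hp).1, (ric p hp).2.1, (ric p hp).2.2.1, (ric p hp).2.2.2,
    skew p hp⟩, ?_⟩
  intro f hf
  have hM : ∀ {p : ℝ × ℝ}, 0 < p.1 → MB ∈ nhds p := fun hp => isOpen_MB.mem_nhds hp
  constructor
  · intro hs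
    have hfc : ∀ p : ℝ × ℝ, 0 < p.1 → ContDiffAt ℝ (⊤ : ℕ∞) f p :=
      fun p hp => hf.contDiffAt (hM hp)
    have hdg : ∀ p : ℝ × ℝ, 0 < p.1 → DifferentiableAt ℝ (pd 0 f) p :=
      fun p hp => (contDiffAt_pd (hfc p hp) 0).differentiableAt (by simp)
    have hdh : ∀ p : ℝ × ℝ, 0 < p.1 → DifferentiableAt ℝ (pd 1 f) p :=
      fun p hp => (contDiffAt_pd (hfc p hp) 1).differentiableAt (by simp)
    have hhess : ∀ (i j : Fin 2) (p : ℝ × ℝ), 0 < p.1 → hessB C f i j p = 0 := by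
      intro i j p hp
      have h := hs i j p hp
      rw [rsym i j p hp] at h
      linarith
    have hB : ∀ q : ℝ × ℝ, 0 < q.1 → pd 1 (pd 0 f) q = (-(ε * c ^ 2) * pd 1 f q) / q.1 := by
      intro q hq
      have H := hhess 1 0 q hq
      simp only [hessB, Fin.sum_univ_two, GammaB, c7, c8] at H
      linear_combination H
    have hD : ∀ q : ℝ × ℝ, 0 < q.1 → pd 0 (pd 1 f) q = (-(ε * c ^ 2) * pd 1 f q) / q.1 := by
      intro q hq
      have H := hhess 0 1 q hq
      simp only [hessB, Fin.sum_univ_two, GammaB, c3, c4] at H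
      linear_combination H
    have hA : ∀ q : ℝ × ℝ, 0 < q.1 →
        pd 0 (pd 0 f) q = ((1 - ε * c ^ 2) * pd 0 f q + c * pd 1 f q) / q.1 := by
      intro q hq
      have H := hhess 0 0 q hq
      simp only [hessB, Fin.sum_univ_two, GammaB, c1, c2] at H
      linear_combination H
    have hE : ∀ q : ℝ × ℝ, 0 < q.1 →
        pd 1 (pd 1 f) q = (ε * pd 0 f q + 2 * ε * c * pd 1 f q) / q.1 := by
      intro q hq
      have H := hhess 1 1 q hq
      simp only [hessB, Fin.sum_univ_two, GammaB, c5, c6] at H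
      linear_combination H
    have hg0 : ∀ p : ℝ × ℝ, 0 < p.1 → pd 0 f p = 0 := by
      intro p hp
      have hx := hp.ne'
      have ev1 : pd 1 (pd 0 f) =ᶠ[nhds p] fun q => (-(ε * c ^ 2) * pd 1 f q) / q.1 :=
        Filter.eventually_of_mem (hM hp) (fun q hq => hB q hq)
      have L1 : pd 0 (pd 1 (pd 0 f)) p
          = (-(ε * c ^ 2) * pd 0 (pd 1 f) p) / p.1
            - (-(ε * c ^ 2) * pd 1 f p) * 1 / p.1 ^ 2 := by
        rw [pd_congr ev1 0, pd_div_x ((hdh p hp).const_mul _) hx 0,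
          pd_const_mul (hdh p hp) _ 0, ee0]
      have ev2 : pd 0 (pd 0 f) =ᶠ[nhds p]
          fun q => ((1 - ε * c ^ 2) * pd 0 f q + c * pd 1 f q) / q.1 :=
        Filter.eventually_of_mem (hM hp) (fun q hq => hA q hq)
      have R1 : pd 1 (pd 0 (pd 0 f)) p
          = ((1 - ε * c ^ 2) * pd 1 (pd 0 f) p + c * pd 1 (pd 1 f) p) / p.1
            - ((1 - ε * c ^ 2) * pd 0 f p + c * pd 1 f p) * 0 / p.1 ^ 2 := by
        rw [pd_congr ev2 1,
          pd_div_x (u := fun q => (1 - ε * c ^ 2) * pd 0 f q + c * pd 1 f q)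
            (((hdg p hp).const_mul _).add ((hdh p hp).const_mul _)) hx 1,
          pd_comb (hdg p hp) (hdh p hp) _ _ 1, ee1]
      have hsym : pd 0 (pd 1 (pd 0 f)) p = pd 1 (pd 0 (pd 0 f)) p :=
        pd_swap (contDiffAt_pd (hfc p hp) 0) 0 1
      rw [L1, R1, hD p hp, hB p hp, hE p hp] at hsym
      have hε0 : ε ≠ 0 := by rcases hε with h | h <;> simp [h]
      have key : ε * c * pd 0 f p / p.1 ^ 2 = 0 := by linear_combination -hsym
      have key2 : ε * c * pd 0 f p = 0 :=
        (div_eq_zero_iff.mp key).resolve_right (pow_ne_zero 2 hx)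
      rcases mul_eq_zero.mp key2 with h | h
      · exact absurd ((mul_eq_zero.mp h).resolve_left hε0) hc0
      · exact h
    have hh0 : ∀ p : ℝ × ℝ, 0 < p.1 → pd 1 f p = 0 := by
      intro p hp
      have hx := hp.ne'
      have ev0 : pd 0 f =ᶠ[nhds p] fun _ => (0 : ℝ) :=
        Filter.eventually_of_mem (hM hp) (fun q hq => hg0 q hq)
      have hz : pd 0 (pd 0 f) p = 0 := (pd_congr ev0 0).trans (pd_const 0 p 0)
      have H := hA p hp
      rw [hz, hg0 p hp] at H
      have key : c * pd 1 f p / p.1 = 0 := by linear_combination -H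
      have key2 : c * pd 1 f p = 0 := (div_eq_zero_iff.mp key).resolve_right hx
      exact (mul_eq_zero.mp key2).resolve_left hc0
    refine ⟨f (1, 0), fun p hp => ?_⟩
    have hder0 : ∀ q ∈ MB, fderivWithin ℝ f MB q = 0 := by
      intro q hq
      have hq' : 0 < q.1 := hq
      rw [fderivWithin_of_isOpen isOpen_MB hq]
      apply ContinuousLinearMap.ext
      intro v
      have hv : v = v.1 • ee 0 + v.2 • ee 1 := by
        rw [ee0, ee1]
        apply Prod.ext <;> simp
      rw [hv, map_add, map_smul, map_smul]
      have e0 : fderiv ℝ f q (ee 0) = 0 := hg0 q hq'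
      have e1 : fderiv ℝ f q (ee 1) = 0 := hh0 q hq'
      simp [e0, e1]
    exact convex_MB.is_const_of_fderivWithin_eq_zero (hf.differentiableOn (by simp))
      hder0 hp (show ((1 : ℝ), (0 : ℝ)) ∈ MB by simp [MB])
  · rintro ⟨κ, hk⟩ i j p hp
    have hzk : ∀ (k : Fin 2) (q : ℝ × ℝ), 0 < q.1 → pd k f q = 0 := by
      intro k q hq
      have hev : f =ᶠ[nhds q] fun _ => κ :=
        Filter.eventually_of_mem (hM hq) (fun r hr => hk r hr)
      exact (pd_congr hev k).trans (pd_const κ q k)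
    have h2 : pd i (pd j f) p = 0 := by
      have hev : pd j f =ᶠ[nhds p] fun _ => (0 : ℝ) :=
        Filter.eventually_of_mem (hM hp) (fun q hq => hzk j q hq)
      exact (pd_congr hev i).trans (pd_const 0 p i)
    rw [rsym i j p hp]
    simp [hessB, Fin.sum_univ_two, h2, hzk 0 p hp, hzk 1 p hp]
end
end

section
/- Let ∇ be a Type A connection on ℝ² with Γ₁₁² = 0, Γ₁₂² = 0, Γ₂₂² ≠ 0, and ρ₂₂ := Γ₁₂¹(Γ₂₂² − Γ₁₂¹) + Γ₁₁¹Γ₂₂¹ ≠ 0 (so ρ has rank 1 and ∇ρ ≠ 0, i.e. ∇ is not symmetric). Then ∇ is geodesically incomplete: there exist a point p ∈ ℝ² and a vector v ∈ ℝ² such that no smooth curve γ : ℝ → ℝ² with γ(0) = p and γ'(0) = v satisfies the geodesic equation (γ^k)'' + Σ_{i,j} Γ_{ij}^k (γ^i)'(γ^j)' = 0 for k = 1,2 on all of ℝ. -/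
noncomputable section

/-- The coordinate functions of ℝ². -/
def coordFn : Fin 2 → ℝ × ℝ → ℝ := ![fun p => p.1, fun p => p.2]

/-- The geodesic equation `(γ^k)'' + Σ_{i,j} Γ_{ij}^k (γ^i)'(γ^j)' = 0` at time `t`,
for a Type A connection with constant Christoffel symbols. -/
def GeodesicEqA (Γ : Fin 2 → Fin 2 → Fin 2 → ℝ) (γ : ℝ → ℝ × ℝ) : Prop :=
  ∀ (k : Fin 2) (t : ℝ),
    deriv (deriv (fun s => coordFn k (γ s))) t
      + ∑ i, ∑ j, Γ i j k * deriv (fun s => coordFn i (γ s)) t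
          * deriv (fun s => coordFn j (γ s)) t = 0

/-- Blow-up for the Riccati equation `u' = -c u²` with `u 0 = -1/c`:
no global differentiable solution exists. -/
lemma riccati_blowup (c : ℝ) (hc : c ≠ 0) (u : ℝ → ℝ)
    (hu : Differentiable ℝ u) (hder : ∀ t, deriv u t = -c * u t ^ 2)
    (hu0 : u 0 = -c⁻¹) : False := by
  -- In both sign cases, `c * u t ≤ -1` on `[0, 1]`.
  have key : ∀ t ∈ Set.Icc (0:ℝ) 1, c * u t ≤ -1 := by
    intro t ht
    rcases lt_or_gt_of_ne hc with hneg | hpos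
    · have hmono : Monotone u := by
        apply monotone_of_deriv_nonneg hu
        intro x
        rw [hder x]
        nlinarith [sq_nonneg (u x)]
      have : u 0 ≤ u t := hmono ht.1
      have : -c⁻¹ ≤ u t := hu0 ▸ this
      calc c * u t ≤ c * (-c⁻¹) := mul_le_mul_of_nonpos_left this hneg.le
        _ = -1 := by field_simp
    · have hanti : Antitone u := by
        apply antitone_of_deriv_nonpos hu
        intro x
        rw [hder x]
        nlinarith [sq_nonneg (u x)]
      have : u t ≤ u 0 := hanti ht.1
      have : u t ≤ -c⁻¹ := hu0 ▸ this
      calc c * u t ≤ c * (-c⁻¹) := mul_le_mul_of_nonneg_left this hpos.le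
        _ = -1 := by field_simp
  have hne : ∀ t ∈ Set.Icc (0:ℝ) 1, u t ≠ 0 := by
    intro t ht h0
    have := key t ht
    rw [h0, mul_zero] at this
    linarith
  have hasD : ∀ t, HasDerivAt u (-c * u t ^ 2) t := by
    intro t
    have := (hu t).hasDerivAt
    rwa [hder t] at this
  -- g t = (u t)⁻¹ - c * t has zero derivative on [0,1]
  set g : ℝ → ℝ := fun t => (u t)⁻¹ - c * t with hg
  have hgD : ∀ x ∈ Set.Icc (0:ℝ) 1, HasDerivAt g 0 x := by
    intro x hx
    have h1 : HasDerivAt (fun t => (u t)⁻¹) (-(-c * u x ^ 2) / u x ^ 2) x :=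
      (hasD x).inv (hne x hx)
    have h2 : HasDerivAt (fun t => c * t) c x := by
      simpa using (hasDerivAt_id x).const_mul c
    have h3 := h1.sub h2
    have hx2 : u x ^ 2 ≠ 0 := pow_ne_zero _ (hne x hx)
    have : -(-c * u x ^ 2) / u x ^ 2 - c = 0 := by
      rw [neg_mul, neg_neg, mul_div_assoc, div_self hx2, mul_one, sub_self]
    rwa [this] at h3
  have hcont : ContinuousOn g (Set.Icc (0:ℝ) 1) :=
    fun x hx => (hgD x hx).continuousAt.continuousWithinAt
  have hconst := constant_of_has_deriv_right_zero hcont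
    (fun x hx => (hgD x (Set.mem_Icc_of_Ico hx)).hasDerivWithinAt)
  have h10 : g 1 = g 0 := hconst 1 (by norm_num)
  have h0 : g 0 = -c := by
    simp only [hg, hu0, mul_zero, sub_zero]
    field_simp
  have h1 : (u 1)⁻¹ = 0 := by
    have : (u 1)⁻¹ - c * 1 = -c := h10.trans h0
    linarith
  exact hne 1 (by norm_num) (inv_eq_zero.mp h1)

/-- a Type A connection normalized so that `Γ₁₁² = Γ₁₂² = 0` with
`Γ₂₂² ≠ 0` and `ρ₂₂ ≠ 0` is geodesically incomplete: some initial condition `(p, v)`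
admits no globally defined geodesic. -/
theorem stmt19 (Γ : Fin 2 → Fin 2 → Fin 2 → ℝ)
    (hΓ : ∀ i j k, Γ i j k = Γ j i k)
    (h1 : Γ 0 0 1 = 0) (h2 : Γ 0 1 1 = 0) (h3 : Γ 1 1 1 ≠ 0)
    (hρ : Γ 0 1 0 * (Γ 1 1 1 - Γ 0 1 0) + Γ 0 0 0 * Γ 1 1 0 ≠ 0) :
    ∃ (p v : ℝ × ℝ), ¬ ∃ γ : ℝ → ℝ × ℝ,
      ContDiff ℝ (⊤ : ℕ∞) γ ∧ γ 0 = p ∧ deriv γ 0 = v ∧ GeodesicEqA Γ γ := by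
  set c := Γ 1 1 1 with hcdef
  refine ⟨(0, 0), (0, -c⁻¹), ?_⟩
  rintro ⟨γ, hγ, hγ0, hγ', hgeo⟩
  -- second component is smooth
  have hγ2 : ContDiff ℝ (⊤ : ℕ∞) (fun s => (γ s).2) := hγ.snd
  set u : ℝ → ℝ := deriv (fun s => (γ s).2) with hu_def
  have hγ2' : ContDiff ℝ ((⊤ : ℕ∞) : WithTop ℕ∞) (fun s => (γ s).2) :=
    hγ2.of_le (by simp)
  have hu : Differentiable ℝ u :=
    ((contDiff_infty_iff_deriv.mp hγ2').2).differentiable (by simp)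
  -- the geodesic equation at k = 1
  have hcoord : (fun s => coordFn 1 (γ s)) = fun s => (γ s).2 := by
    funext s; simp [coordFn]
  have hder : ∀ t, deriv u t = -c * u t ^ 2 := by
    intro t
    have := hgeo 1 t
    rw [hcoord] at this
    simp only [Fin.sum_univ_two] at this
    rw [hcoord] at this
    rw [h1, h2, hΓ 1 0 1, h2] at this
    rw [← hu_def] at this
    nlinarith [this]
  have hu0 : u 0 = -c⁻¹ := by
    have hd : HasDerivAt γ (deriv γ 0) 0 := (hγ.differentiable (by simp) 0).hasDerivAt
    have hs : HasDerivAt (fun s => (γ s).2) (deriv γ 0).2 0 := by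
      exact ((ContinuousLinearMap.snd ℝ ℝ ℝ).hasFDerivAt).comp_hasDerivAt 0 hd
    rw [hu_def, hs.deriv, hγ']
  exact riccati_blowup c h3 u hu hder hu0
end
end
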